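/- Let H be a Hilbert space, Y a closed subspace of H × H with orthogonal projection P_Y onto Y and P_{Y^⊥} onto its orthogonal complement, and let λ > 0 with √λ ∈ (0, π). Then a pair (A,B) ∈ H × H satisfies P_{Y^⊥}(A, A·cos√λ + B·sin√λ) = 0 and P_Y(B, A·sin√λ − B·cos√λ) = 0 if and only if the pair (B,A) satisfies P_Y(B, B·cos√μ + A·sin√μ) = 0 and P_{Y^⊥}(A, B·sin√μ − A·cos√μ) = 0, where μ = (π − √λ)². -/

import Mathlib

/-! Since `√μ = π - √λ`, the `μ`-coefficients are `cos √μ = -cos √λ` and `sin √μ = sin √λ`, so the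
two conditions for `(B, A)` are literally the two conditions for `(A, B)` in the other order. -/

namespace Real

theorem cos_sqrt_sq_pi_sub {x : ℝ} (hx : x ≤ π) : cos √((π - x) ^ 2) = -cos x := by
  rw [sqrt_sq (sub_nonneg.mpr hx), cos_pi_sub]

theorem sin_sqrt_sq_pi_sub {x : ℝ} (hx : x ≤ π) : sin √((π - x) ^ 2) = sin x := by
  rw [sqrt_sq (sub_nonneg.mpr hx), sin_pi_sub]

end Real

theorem stmt_2_general {H : Type*} [NormedAddCommGroup H] [InnerProductSpace ℂ H]
    (Y : Submodule ℂ (WithLp 2 (H × H)))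
    [CompleteSpace Y]
    (l : ℝ) (hl' : Real.sqrt l < Real.pi) (A B : H) :
    let c : ℂ := (Real.cos (Real.sqrt l) : ℝ)
    let s : ℂ := (Real.sin (Real.sqrt l) : ℝ)
    let μ : ℝ := (Real.pi - Real.sqrt l) ^ 2
    let cμ : ℂ := (Real.cos (Real.sqrt μ) : ℝ)
    let sμ : ℂ := (Real.sin (Real.sqrt μ) : ℝ)
    ((Submodule.orthogonalProjectionOnto Yᗮ ((WithLp.equiv 2 (H × H)).symm (A, c • A + s • B)) = 0 ∧
      Submodule.orthogonalProjectionOnto Y ((WithLp.equiv 2 (H × H)).symm (B, s • A - c • B)) = 0) ↔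
     (Submodule.orthogonalProjectionOnto Y ((WithLp.equiv 2 (H × H)).symm (B, cμ • B + sμ • A)) = 0 ∧
      Submodule.orthogonalProjectionOnto Yᗮ ((WithLp.equiv 2 (H × H)).symm (A, sμ • B - cμ • A)) = 0)) := by
  intro c s μ cμ sμ
  have hcμ : cμ = -c := by
    simp only [cμ, μ, c, Real.cos_sqrt_sq_pi_sub hl'.le, Complex.ofReal_neg]
  have hsμ : sμ = s := by
    simp only [sμ, μ, s, Real.sin_sqrt_sq_pi_sub hl'.le]
  have hY_arg : cμ • B + sμ • A = s • A - c • B := by rw [hcμ, hsμ]; module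
  have hYperp_arg : sμ • B - cμ • A = c • A + s • B := by rw [hcμ, hsμ]; module
  rw [hY_arg, hYperp_arg, and_comm]

theorem stmt_2 {H : Type*} [NormedAddCommGroup H] [InnerProductSpace ℂ H] [CompleteSpace H]
    (Y : Submodule ℂ (WithLp 2 (H × H)))
    (hY : IsClosed (Y : Set (WithLp 2 (H × H)))) [CompleteSpace Y] [CompleteSpace Yᗮ]
    (l : ℝ) (hl : 0 < Real.sqrt l) (hl' : Real.sqrt l < Real.pi) (A B : H) :
    let c : ℂ := (Real.cos (Real.sqrt l) : ℝ)
    let s : ℂ := (Real.sin (Real.sqrt l) : ℝ)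
    let μ : ℝ := (Real.pi - Real.sqrt l) ^ 2
    let cμ : ℂ := (Real.cos (Real.sqrt μ) : ℝ)
    let sμ : ℂ := (Real.sin (Real.sqrt μ) : ℝ)
    ((Submodule.orthogonalProjectionOnto Yᗮ ((WithLp.equiv 2 (H × H)).symm (A, c • A + s • B)) = 0 ∧
      Submodule.orthogonalProjectionOnto Y ((WithLp.equiv 2 (H × H)).symm (B, s • A - c • B)) = 0) ↔
     (Submodule.orthogonalProjectionOnto Y ((WithLp.equiv 2 (H × H)).symm (B, cμ • B + sμ • A)) = 0 ∧
      Submodule.orthogonalProjectionOnto Yᗮ ((WithLp.equiv 2 (H × H)).symm (A, sμ • B - cμ • A)) = 0)) :=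
  stmt_2_general Y l hl' A B
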